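/- Let G₁ and G₂ be finite simple graphs with replaceable edges (e₁, e₂, g), where e₁ = (u₁,u₂) ∈ E(G₁), e₂ = (v₁,v₂) ∈ E(G₂), and g : {u₁,u₂} → {v₁,v₂} is the witnessing bijection. Then in the edge-deleted graphs G₁ − e₁ and G₂ − e₂, the sets {u₁,u₂} and {v₁,v₂} remain removal cospectral with the same bijection g. -/

import Mathlib

open scoped Classical

/-- Two finite simple graphs are cospectral if their adjacency matrices have the same
characteristic polynomial. -/
def Cospectral {V W : Type*} [Fintype V] [Fintype W]
    (G : SimpleGraph V) (H : SimpleGraph W) : Prop :=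
  (SimpleGraph.adjMatrix ℤ G).charpoly = (SimpleGraph.adjMatrix ℤ H).charpoly

/-- The image of a set `X` (intersected with `S`) under a bijection `f : S ≃ T`. -/
def Equiv.mapSet {V W : Type*} {S : Set V} {T : Set W} (f : S ≃ T) (X : Set V) : Set W :=
  Subtype.val '' (f '' (Subtype.val ⁻¹' X))

/-- `S ⊆ V(G)` and `T ⊆ V(H)` are removal cospectral with witnessing bijection `f : S ≃ T`:
for every `X ⊆ S`, deleting the vertices of `X` from `G` and of `f(X)` from `H` yields
cospectral graphs. -/
def RemovalCospectral {V W : Type*} [Fintype V] [Fintype W]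
    (G : SimpleGraph V) (H : SimpleGraph W) (S : Set V) (T : Set W) (f : S ≃ T) : Prop :=
  ∀ X : Set V, X ⊆ S → Cospectral (G.induce Xᶜ) (H.induce (Equiv.mapSet f X)ᶜ)


/-!
Fix an edge `e = uv` of `G`, write `φ` for characteristic polynomials and `N = xI - A(G)`. The
Schur complement of the block of `N` on `V ∖ {u, v}` (over the fraction field of `ℤ[x]`) reduces
everything to `2 × 2` determinants. It gives the Desnanot–Jacobi identity
`φ(G-u-v) φ(G) = φ(G-u) φ(G-v) - χ²`, where `±χ` is the minor of `N` with row `u` and column `v`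
deleted, and, since deleting `e` adds `1` to the entries `(u, v)` and `(v, u)` of `N`, also
`φ(G-e) = φ(G) - φ(G-u-v) + 2χ`. The entry `N u v = -1` is a unit, and the Schur complement of
that `1 × 1` block makes `χ` the characteristic polynomial of an integer matrix, so `χ` is monic.

Removal cospectrality for `X = ∅`, `{u, v}` and the singletons fixes `φ(G)`, `φ(G-u-v)` and the
product `φ(G-u) φ(G-v)`, hence `χ²`, hence the monic `χ`, hence `φ(G-e)`. Every other `X ⊆ {u, v}`
contains an end of `e`, so deleting `X` deletes `e` anyway.
-/

open Polynomial Matrix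

theorem Polynomial.Monic.eq_of_sq_eq {R : Type*} [CommRing R] [NoZeroDivisors R] [NeZero (2 : R)]
    {p q : R[X]} (hp : p.Monic) (hq : q.Monic) (h : p ^ 2 = q ^ 2) : p = q := by
  refine (sq_eq_sq_iff_eq_or_eq_neg.mp h).resolve_right fun hpq => two_ne_zero (α := R) ?_
  have hlc := congrArg Polynomial.leadingCoeff hpq
  rw [leadingCoeff_neg, hp.leadingCoeff, hq.leadingCoeff] at hlc
  linear_combination hlc

namespace Matrix

variable {R : Type*} [CommRing R]

/-- Over the fraction field this is `det_fromBlocks₁₁`, with `adjugate A = det A • A⁻¹`. -/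
theorem det_pow_mul_det_fromBlocks_submatrix [IsDomain R]
    {m κ ι : Type*} [Fintype m] [DecidableEq m] [Fintype ι] [DecidableEq ι]
    (A : Matrix m m R) (B : Matrix m κ R) (C : Matrix κ m R) (D : Matrix κ κ R)
    (hA : A.det ≠ 0) (k l : ι → κ) :
    A.det ^ Fintype.card ι * (fromBlocks A (B.submatrix id l) (C.submatrix k id)
        (D.submatrix k l)).det =
      A.det * ((A.det • D - C * A.adjugate * B).submatrix k l).det := by
  apply IsFractionRing.injective R (FractionRing R)
  set f := algebraMap R (FractionRing R)
  have hunit : IsUnit (A.map f).det := by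
    rw [← RingHom.mapMatrix_apply, ← RingHom.map_det, isUnit_iff_ne_zero]
    exact (map_ne_zero_iff f (IsFractionRing.injective R _)).mpr hA
  let := (A.map f).invertibleOfIsUnitDet hunit
  have hadj : A.adjugate.map f = (A.map f).det • (A.map f)⁻¹ := by
    rw [← RingHom.mapMatrix_apply, RingHom.map_adjugate, RingHom.mapMatrix_apply, inv_def,
      smul_smul, Ring.mul_inverse_cancel _ hunit, one_smul]
  have hschur : ((A.det • D - C * A.adjugate * B).submatrix k l).map f =
      (A.map f).det • ((D.submatrix k l).map f -
        (C.submatrix k id).map f * (A.map f)⁻¹ * (B.submatrix id l).map f) := by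
    rw [← submatrix_map, Matrix.map_sub _ (map_sub f), Matrix.map_smul' _ _ _ (map_mul f),
      Matrix.map_mul, Matrix.map_mul, hadj, RingHom.map_det, RingHom.mapMatrix_apply]
    ext i j
    simp [Matrix.mul_apply, Matrix.smul_apply, Finset.mul_sum, mul_sub]
  simp only [map_mul, map_pow, RingHom.map_det, RingHom.mapMatrix_apply]
  rw [fromBlocks_map, det_fromBlocks₁₁, hschur, det_smul, invOf_eq_nonsing_inv, Fintype.card]
  ring

theorem det_submatrix_eq_of_range_eq {n ι κ : Type*} [Fintype ι] [DecidableEq ι] [Fintype κ]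
    [DecidableEq κ] (N : Matrix n n R) {f : ι → n} {g : κ → n} (hf : f.Injective)
    (hg : g.Injective) (h : Set.range f = Set.range g) :
    (N.submatrix f f).det = (N.submatrix g g).det := by
  let σ : ι ≃ κ :=
    (Equiv.ofInjective f hf).trans ((Equiv.setCongr h).trans (Equiv.ofInjective g hg).symm)
  have hσ : g ∘ σ = f := funext fun i => by simp [σ, Equiv.apply_ofInjective_symm]
  rw [← det_submatrix_equiv_self σ, submatrix_submatrix, hσ]

section PairMinors

variable {n : Type*} (u v : n)

/-- Rows or columns of a minor: the indices outside `{u, v}`, followed by `![u, v] ∘ k`. -/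
def extendPair {ι : Type*} (k : ι → Fin 2) : ({u, v}ᶜ : Set n) ⊕ ι → n :=
  Sum.elim Subtype.val (![u, v] ∘ k)

variable {u v}

theorem ne_and_ne_of_mem_compl_pair {x : n} (hx : x ∈ ({u, v}ᶜ : Set n)) : x ≠ u ∧ x ≠ v := by
  simpa [not_or] using hx

theorem injective_vecCons_pair (huv : u ≠ v) : Function.Injective ![u, v] := by
  intro i j h
  fin_cases i <;> fin_cases j <;> simp_all [eq_comm]

theorem injective_extendPair {ι : Type*} {k : ι → Fin 2} (hk : (![u, v] ∘ k).Injective) :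
    (extendPair u v k).Injective := by
  have hmem (j : Fin 2) : ![u, v] j ∈ ({u, v} : Set n) := by fin_cases j <;> simp
  exact Subtype.val_injective.sumElim hk fun x i hx => x.2 (hx ▸ hmem (k i))

theorem range_extendPair_id : Set.range (extendPair u v id) = Set.univ := by
  ext x
  simp only [extendPair, Set.Sum.elim_range, Subtype.range_coe, Function.comp_id, Set.mem_union,
    Set.mem_compl_iff, Set.mem_insert_iff, Set.mem_singleton_iff, Matrix.range_cons,
    Matrix.range_empty, Set.union_empty, Set.mem_univ, iff_true]
  tauto

theorem range_extendPair_const (huv : u ≠ v) (i : Fin 2) :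
    Set.range (extendPair u v fun _ : Fin 1 => i) = {![v, u] i}ᶜ := by
  ext x
  fin_cases i <;> by_cases hx : x = u <;> by_cases hx' : x = v <;>
    simp_all [extendPair, Set.Sum.elim_range, Set.range_comp]

theorem submatrix_extendPair {α ι : Type*} (N : Matrix n n α) (k l : ι → Fin 2) :
    N.submatrix (extendPair u v k) (extendPair u v l) =
      fromBlocks (N.submatrix (Subtype.val : ({u, v}ᶜ : Set n) → n) Subtype.val)
        ((N.submatrix Subtype.val ![u, v]).submatrix id l)
        ((N.submatrix ![u, v] Subtype.val).submatrix k id)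
        ((N.submatrix ![u, v] ![u, v]).submatrix k l) := by
  ext (i | i) (j | j) <;> rfl

variable [Fintype n] [DecidableEq n]

def principalMinor (N : Matrix n n R) (s : Set n) [Fintype s] : R :=
  (N.submatrix ((↑) : s → n) (↑)).det

/-- `(det A) • (D - C A⁻¹ B)` for the blocks `A` on `{u, v}ᶜ` and `D` on `![u, v]`: the Schur
complement of `A`, scaled by `det A` so that it is defined over `R`. -/
def pairSchur (N : Matrix n n R) (u v : n) : Matrix (Fin 2) (Fin 2) R :=
  let c : Set n := {u, v}ᶜ
  let A := N.submatrix ((↑) : c → n) (↑)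
  A.det • N.submatrix ![u, v] ![u, v] - N.submatrix ![u, v] ((↑) : c → n) * A.adjugate *
    N.submatrix ((↑) : c → n) ![u, v]

variable (N : Matrix n n R)

theorem det_submatrix_extendPair_const (huv : u ≠ v) {i : Fin 2} {w : n} (hw : ![v, u] i = w) :
    (N.submatrix (extendPair u v fun _ : Fin 1 => i) (extendPair u v fun _ : Fin 1 => i)).det =
      N.principalMinor {w}ᶜ :=
  det_submatrix_eq_of_range_eq N (injective_extendPair (Function.injective_of_subsingleton _))
    Subtype.val_injective (by rw [range_extendPair_const huv, Subtype.range_coe, hw])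

theorem det_submatrix_extendPair_swap (hN : Nᵀ = N) (i j : Fin 2) :
    (N.submatrix (extendPair u v fun _ : Fin 1 => i) (extendPair u v fun _ : Fin 1 => j)).det =
      (N.submatrix (extendPair u v fun _ : Fin 1 => j)
        (extendPair u v fun _ : Fin 1 => i)).det := by
  rw [← det_transpose, transpose_submatrix, hN]

theorem monic_neg_det_charmatrix_submatrix_extendPair [Nontrivial R] (M : Matrix n n R)
    (huv : u ≠ v) (hM : M u v = 1) :
    (-((charmatrix M).submatrix (extendPair u v fun _ : Fin 1 => 0)
      (extendPair u v fun _ : Fin 1 => 1)).det).Monic := by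
  have hD : ((charmatrix M).submatrix ![u, v] ![u, v]).submatrix (fun _ : Fin 1 => 0)
      (fun _ : Fin 1 => 1) = -1 := by
    ext i j : 1
    rw [submatrix_apply, submatrix_apply, Subsingleton.elim i j]
    simp [charmatrix_apply_ne _ _ _ huv, hM]
  let := invertibleOne (α := Matrix (Fin 1) (Fin 1) R[X])
  let := invertibleNeg (1 : Matrix (Fin 1) (Fin 1) R[X])
  rw [submatrix_extendPair, hD, det_fromBlocks₂₂, invOf_neg, invOf_one, det_neg, det_one,
    Fintype.card_fin]
  have hc (i : ({u, v}ᶜ : Set n)) := ne_and_ne_of_mem_compl_pair i.2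
  have hS : (charmatrix M).submatrix Subtype.val Subtype.val -
      ((charmatrix M).submatrix Subtype.val ![u, v]).submatrix id (fun _ : Fin 1 => 1) *
        (-1 : Matrix (Fin 1) (Fin 1) R[X]) *
        ((charmatrix M).submatrix ![u, v] Subtype.val).submatrix (fun _ : Fin 1 => 0) id =
      charmatrix (M.submatrix (Subtype.val : ({u, v}ᶜ : Set n) → n) Subtype.val -
        M.submatrix Subtype.val (fun _ : Fin 1 => v) *
          M.submatrix (fun _ : Fin 1 => u) Subtype.val) := by
    ext i j : 1
    simp only [sub_apply, mul_apply, submatrix_apply, charmatrix_apply, diagonal_apply]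
    simp [Subtype.ext_iff, (hc i).2, (hc j).1.symm]
    ring
  rw [hS]
  simpa [Matrix.charpoly] using charpoly_monic _

variable [IsDomain R]

theorem det_pow_mul_det_submatrix_extendPair {ι : Type*} [Fintype ι] [DecidableEq ι]
    (hψ : N.principalMinor {u, v}ᶜ ≠ 0) (k l : ι → Fin 2) :
    N.principalMinor {u, v}ᶜ ^ Fintype.card ι *
      (N.submatrix (extendPair u v k) (extendPair u v l)).det =
    N.principalMinor {u, v}ᶜ *
      ((pairSchur N u v).submatrix k l).det := by
  rw [submatrix_extendPair, principalMinor, det_pow_mul_det_fromBlocks_submatrix _ _ _ _ hψ]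
  rfl

theorem det_submatrix_extendPair_single
    (hψ : N.principalMinor {u, v}ᶜ ≠ 0) (i j : Fin 2) :
    (N.submatrix (extendPair u v fun _ : Fin 1 => i) (extendPair u v fun _ : Fin 1 => j)).det =
      pairSchur N u v i j := by
  have h := det_pow_mul_det_submatrix_extendPair N hψ (fun _ : Fin 1 => i) (fun _ : Fin 1 => j)
  rw [Fintype.card_fin, pow_one, det_fin_one, submatrix_apply] at h
  exact mul_left_cancel₀ hψ h

theorem mul_det_eq_det_pairSchur (huv : u ≠ v)
    (hψ : N.principalMinor {u, v}ᶜ ≠ 0) :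
    N.principalMinor {u, v}ᶜ * N.det =
      (pairSchur N u v).det := by
  have h := det_pow_mul_det_submatrix_extendPair N hψ id id
  rw [det_submatrix_eq_of_range_eq N (injective_extendPair (k := id) (injective_vecCons_pair huv))
      Function.injective_id (by rw [range_extendPair_id, Set.range_id]),
    submatrix_id_id, submatrix_id_id, Fintype.card_fin, pow_two, mul_assoc] at h
  exact mul_left_cancel₀ hψ h

theorem pairSchur_symm (hN : Nᵀ = N)
    (hψ : N.principalMinor {u, v}ᶜ ≠ 0) :
    pairSchur N u v 1 0 = pairSchur N u v 0 1 := by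
  rw [← det_submatrix_extendPair_single N hψ, det_submatrix_extendPair_swap N hN,
    det_submatrix_extendPair_single N hψ]

theorem det_submatrix_compl_pair_mul_det (hN : Nᵀ = N) (huv : u ≠ v)
    (hψ : N.principalMinor {u, v}ᶜ ≠ 0) :
    N.principalMinor {u, v}ᶜ * N.det =
      N.principalMinor {u}ᶜ *
        N.principalMinor {v}ᶜ -
      (N.submatrix (extendPair u v fun _ : Fin 1 => 0)
        (extendPair u v fun _ : Fin 1 => 1)).det ^ 2 := by
  rw [← det_submatrix_extendPair_const N huv (i := 1) (w := u) rfl,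
    ← det_submatrix_extendPair_const N huv (i := 0) (w := v) rfl]
  simp only [det_submatrix_extendPair_single N hψ, mul_det_eq_det_pairSchur N huv hψ, det_fin_two,
    pairSchur_symm N hN hψ]
  ring

theorem det_add_single_add_single (hN : Nᵀ = N) (huv : u ≠ v)
    (hψ : N.principalMinor {u, v}ᶜ ≠ 0) :
    (N + single u v 1 + single v u 1).det = N.det -
      2 * (N.submatrix (extendPair u v fun _ : Fin 1 => 0)
        (extendPair u v fun _ : Fin 1 => 1)).det -
      N.principalMinor {u, v}ᶜ := by
  have hc (i : ({u, v}ᶜ : Set n)) := ne_and_ne_of_mem_compl_pair i.2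
  set N' := N + single u v 1 + single v u 1
  have hA : (N'.submatrix Subtype.val Subtype.val :
      Matrix ({u, v}ᶜ : Set n) ({u, v}ᶜ : Set n) R) =
      N.submatrix Subtype.val Subtype.val := by
    ext i j; simp [N', (hc i).1.symm, (hc i).2.symm]
  have hB : (N'.submatrix Subtype.val ![u, v] : Matrix ({u, v}ᶜ : Set n) (Fin 2) R) =
      N.submatrix Subtype.val ![u, v] := by
    ext i j; simp [N', (hc i).1.symm, (hc i).2.symm]
  have hC : (N'.submatrix ![u, v] Subtype.val : Matrix (Fin 2) ({u, v}ᶜ : Set n) R) =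
      N.submatrix ![u, v] Subtype.val := by
    ext i j; simp [N', (hc j).1.symm, (hc j).2.symm]
  have hD : N'.submatrix ![u, v] ![u, v] = N.submatrix ![u, v] ![u, v] + !![0, 1; 1, 0] := by
    ext i j; rw [Matrix.add_apply]; fin_cases i <;> fin_cases j <;> simp [N', huv, huv.symm]
  have hP : pairSchur N' u v = pairSchur N u v +
      N.principalMinor {u, v}ᶜ • !![0, 1; 1, 0] := by
    simp only [pairSchur, principalMinor, hA, hB, hC, hD, smul_add]
    abel
  have hψ' : N'.principalMinor {u, v}ᶜ = N.principalMinor {u, v}ᶜ := by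
    rw [principalMinor, principalMinor, hA]
  have hN' := mul_det_eq_det_pairSchur N' huv (hψ' ▸ hψ)
  rw [hψ', hP, det_fin_two] at hN'
  refine mul_left_cancel₀ hψ ?_
  rw [hN', mul_sub, mul_sub, mul_det_eq_det_pairSchur N huv hψ, det_fin_two,
    det_submatrix_extendPair_single N hψ]
  simp [pairSchur_symm N hN hψ]
  ring

end PairMinors

end Matrix

namespace SimpleGraph

variable {V : Type*}

/-- The characteristic polynomial of the adjacency matrix, taken with respect to instances chosen
once and for all, so that it does not depend on `Fintype` or decidability instances. -/
noncomputable def adjCharpoly [Finite V] (G : SimpleGraph V) : ℤ[X] :=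
  let := Fintype.ofFinite V
  (G.adjMatrix ℤ).charpoly

theorem charpoly_adjMatrix [Fintype V] [DecidableEq V] (G : SimpleGraph V)
    [DecidableRel G.Adj] :
    (G.adjMatrix ℤ).charpoly = G.adjCharpoly := by
  unfold adjCharpoly
  congr!

/-- The `Fintype` instances are implicit so that the lemma applies to whichever instances a
`Cospectral` term was elaborated with. -/
theorem _root_.cospectral_iff_adjCharpoly_eq {W : Type*} {_ : Fintype V} {_ : Fintype W}
    {G : SimpleGraph V} {H : SimpleGraph W} : Cospectral G H ↔ G.adjCharpoly = H.adjCharpoly := by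
  rw [Cospectral, charpoly_adjMatrix, charpoly_adjMatrix]

theorem adjCharpoly_induce_congr [Finite V] (G : SimpleGraph V) {s t : Set V} (h : s = t) :
    (G.induce s).adjCharpoly = (G.induce t).adjCharpoly := by
  subst h
  rfl

theorem adjCharpoly_monic [Finite V] (G : SimpleGraph V) : G.adjCharpoly.Monic := by
  let := Fintype.ofFinite V
  rw [← charpoly_adjMatrix]
  exact charpoly_monic _

theorem induce_compl_deleteEdges_of_mem (G : SimpleGraph V) {u v w : V} {X : Set V}
    (hwX : w ∈ X) (hw : w ∈ ({u, v} : Set V)) :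
    (G.deleteEdges {s(u, v)}).induce Xᶜ = G.induce Xᶜ := by
  ext a b
  simp only [comap_adj, Function.Embedding.coe_subtype, deleteEdges_adj, Set.mem_singleton_iff,
    and_iff_left_iff_imp]
  rintro - hab
  rcases Sym2.eq_iff.mp hab with ⟨rfl, rfl⟩ | ⟨rfl, rfl⟩ <;>
    rcases hw with rfl | rfl <;> first | exact a.2 hwX | exact b.2 hwX

section Charmatrix

variable [Fintype V] [DecidableEq V] (G : SimpleGraph V) [DecidableRel G.Adj]

theorem adjCharpoly_eq_det : G.adjCharpoly = (charmatrix (G.adjMatrix ℤ)).det :=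
  (charpoly_adjMatrix G).symm

theorem adjCharpoly_induce (s : Set V) [Fintype s] :
    (G.induce s).adjCharpoly = (charmatrix (G.adjMatrix ℤ)).principalMinor s := by
  rw [← charpoly_adjMatrix, Matrix.charpoly, principalMinor]
  congr 1
  ext i j : 1
  by_cases h : i = j
  · subst h; simp
  · simp [charmatrix_apply_ne _ _ _ h, charmatrix_apply_ne _ _ _ (Subtype.val_injective.ne h),
      adjMatrix_apply]

theorem charmatrix_adjMatrix_deleteEdges {u v : V} (h : G.Adj u v) :
    charmatrix ((G.deleteEdges {s(u, v)}).adjMatrix ℤ) =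
      charmatrix (G.adjMatrix ℤ) + single u v 1 + single v u 1 := by
  ext i j : 1
  by_cases hij : i = j
  · subst hij
    have h₁ : single u v (1 : ℤ[X]) i i = 0 :=
      single_apply_of_ne _ _ _ _ _ fun h' => h.ne (h'.1.trans h'.2.symm)
    have h₂ : single v u (1 : ℤ[X]) i i = 0 :=
      single_apply_of_ne _ _ _ _ _ fun h' => h.ne (h'.2.trans h'.1.symm)
    simp [h₁, h₂, charmatrix_apply_eq]
  · simp [charmatrix_apply_ne _ _ _ hij, single_apply]
    split_ifs <;> grind [h.symm]

end Charmatrix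

variable [Fintype V]

theorem adjCharpoly_induce_compl_empty (G : SimpleGraph V) :
    (G.induce ∅ᶜ).adjCharpoly = G.adjCharpoly := by
  rw [adjCharpoly_induce, adjCharpoly_eq_det, principalMinor, det_submatrix_eq_of_range_eq _
    Subtype.val_injective Function.injective_id
    (by rw [Subtype.range_coe, Set.range_id, Set.compl_empty]), submatrix_id_id]

theorem exists_monic_adjCharpoly_deleteEdges {G : SimpleGraph V} {u v : V} (h : G.Adj u v) :
    ∃ χ : ℤ[X], χ.Monic ∧
      (G.induce {u, v}ᶜ).adjCharpoly * G.adjCharpoly =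
        (G.induce {u}ᶜ).adjCharpoly * (G.induce {v}ᶜ).adjCharpoly - χ ^ 2 ∧
      (G.deleteEdges {s(u, v)}).adjCharpoly =
        G.adjCharpoly + 2 * χ - (G.induce {u, v}ᶜ).adjCharpoly := by
  set N := charmatrix (G.adjMatrix ℤ)
  have hN : Nᵀ = N := by rw [← charmatrix_transpose, transpose_adjMatrix]
  have hψ : N.principalMinor {u, v}ᶜ ≠ 0 := by
    rw [← adjCharpoly_induce]
    exact (adjCharpoly_monic _).ne_zero
  refine ⟨_, monic_neg_det_charmatrix_submatrix_extendPair (G.adjMatrix ℤ) h.ne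
    ((adjMatrix_apply _ _ _).trans (if_pos h)), ?_, ?_⟩
  · rw [neg_sq, adjCharpoly_induce, adjCharpoly_induce, adjCharpoly_induce,
      adjCharpoly_eq_det]
    exact det_submatrix_compl_pair_mul_det N hN h.ne hψ
  · rw [adjCharpoly_eq_det, adjCharpoly_eq_det, charmatrix_adjMatrix_deleteEdges G h,
      det_add_single_add_single N hN h.ne hψ, adjCharpoly_induce]
    ring

theorem adjCharpoly_deleteEdges_eq {W : Type*} [Fintype W] {G₁ : SimpleGraph V}
    {G₂ : SimpleGraph W} {u₁ u₂ : V} {v₁ v₂ : W} (h₁ : G₁.Adj u₁ u₂) (h₂ : G₂.Adj v₁ v₂)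
    (hφ : G₁.adjCharpoly = G₂.adjCharpoly)
    (hψ : (G₁.induce {u₁, u₂}ᶜ).adjCharpoly = (G₂.induce {v₁, v₂}ᶜ).adjCharpoly)
    (hprod : (G₁.induce {u₁}ᶜ).adjCharpoly * (G₁.induce {u₂}ᶜ).adjCharpoly =
      (G₂.induce {v₁}ᶜ).adjCharpoly * (G₂.induce {v₂}ᶜ).adjCharpoly) :
    (G₁.deleteEdges {s(u₁, u₂)}).adjCharpoly = (G₂.deleteEdges {s(v₁, v₂)}).adjCharpoly := by
  obtain ⟨χ₁, hχ₁, hjac₁, hdel₁⟩ := exists_monic_adjCharpoly_deleteEdges h₁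
  obtain ⟨χ₂, hχ₂, hjac₂, hdel₂⟩ := exists_monic_adjCharpoly_deleteEdges h₂
  have hχ : χ₁ = χ₂ := hχ₁.eq_of_sq_eq hχ₂ <| by
    rw [hφ, hψ, hprod] at hjac₁
    linear_combination hjac₁ - hjac₂
  rw [hdel₁, hdel₂, hφ, hψ, hχ]

end SimpleGraph

namespace Equiv

variable {V W : Type*} {S : Set V} {T : Set W} (f : S ≃ T)

theorem mapSet_empty : f.mapSet ∅ = ∅ := by
  simp [mapSet]

theorem mapSet_self : f.mapSet S = T := by
  rw [mapSet, Subtype.coe_preimage_self, Set.image_univ, f.range_eq_univ, Set.image_univ,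
    Subtype.range_coe]

theorem mapSet_singleton {x : V} (hx : x ∈ S) : f.mapSet {x} = {(f ⟨x, hx⟩ : W)} := by
  have hpre : (Subtype.val ⁻¹' {x} : Set S) = {⟨x, hx⟩} := by
    ext y
    simp [Subtype.ext_iff]
  rw [mapSet, hpre, Set.image_singleton, Set.image_singleton]

theorem mem_mapSet {X : Set V} {x : V} (hxX : x ∈ X) (hxS : x ∈ S) :
    (f ⟨x, hxS⟩ : W) ∈ f.mapSet X :=
  ⟨f ⟨x, hxS⟩, ⟨⟨x, hxS⟩, hxX, rfl⟩, rfl⟩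

end Equiv

theorem adjCharpoly_induce_compl_mapSet_empty {V W : Type*} [Fintype W] {S : Set V}
    {T : Set W} (f : S ≃ T) (H : SimpleGraph W) :
    (H.induce (f.mapSet ∅)ᶜ).adjCharpoly = H.adjCharpoly := by
  rw [H.adjCharpoly_induce_congr (congrArg _ f.mapSet_empty), H.adjCharpoly_induce_compl_empty]

section RemovalCospectral

variable {V W : Type*} [Fintype V] [Fintype W] {G : SimpleGraph V} {H : SimpleGraph W}
  {S : Set V} {T : Set W} {f : S ≃ T}

theorem RemovalCospectral.adjCharpoly_eq (h : RemovalCospectral G H S T f) :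
    G.adjCharpoly = H.adjCharpoly := by
  have h₀ := cospectral_iff_adjCharpoly_eq.mp (h ∅ (Set.empty_subset S))
  rwa [G.adjCharpoly_induce_compl_empty, adjCharpoly_induce_compl_mapSet_empty] at h₀

theorem RemovalCospectral.adjCharpoly_induce_compl_eq (h : RemovalCospectral G H S T f) :
    (G.induce Sᶜ).adjCharpoly = (H.induce Tᶜ).adjCharpoly :=
  (cospectral_iff_adjCharpoly_eq.mp (h S subset_rfl)).trans
    (H.adjCharpoly_induce_congr (congrArg _ f.mapSet_self))

theorem RemovalCospectral.finprod_adjCharpoly_induce_compl_singleton_eq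
    (h : RemovalCospectral G H S T f) :
    ∏ᶠ x ∈ S, (G.induce {x}ᶜ).adjCharpoly = ∏ᶠ y ∈ T, (H.induce {y}ᶜ).adjCharpoly := by
  have hsingle (x : S) :
      (G.induce {(x : V)}ᶜ).adjCharpoly = (H.induce {(f x : W)}ᶜ).adjCharpoly :=
    (cospectral_iff_adjCharpoly_eq.mp (h {(x : V)} (Set.singleton_subset_iff.mpr x.2))).trans
      (H.adjCharpoly_induce_congr (congrArg _ (f.mapSet_singleton x.2)))
  rw [← finprod_set_coe_eq_finprod_mem, ← finprod_set_coe_eq_finprod_mem, finprod_congr hsingle,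
    finprod_comp_equiv f (f := fun y : T => (H.induce {(y : W)}ᶜ).adjCharpoly)]

end RemovalCospectral

/-- **Lemma 2 (first part).** If `(e₁, e₂, g)` are replaceable edges of `G₁` and `G₂`, where
`e₁ = (u₁,u₂)`, `e₂ = (v₁,v₂)` and `g : {u₁,u₂} ≃ {v₁,v₂}` witnesses that the incident vertex
sets are removal cospectral, then in the edge-deleted graphs `G₁ − e₁` and `G₂ − e₂` the sets
`{u₁,u₂}` and `{v₁,v₂}` remain removal cospectral with the same bijection `g`. -/
theorem removalCospectral_deleteEdges_of_replaceableEdges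
    {V W : Type*} [Fintype V] [Fintype W]
    (G₁ : SimpleGraph V) (G₂ : SimpleGraph W)
    (u₁ u₂ : V) (v₁ v₂ : W)
    (he₁ : G₁.Adj u₁ u₂) (he₂ : G₂.Adj v₁ v₂)
    (g : ({u₁, u₂} : Set V) ≃ ({v₁, v₂} : Set W))
    (hg : RemovalCospectral G₁ G₂ {u₁, u₂} {v₁, v₂} g) :
    RemovalCospectral (G₁.deleteEdges {s(u₁, u₂)}) (G₂.deleteEdges {s(v₁, v₂)})
      {u₁, u₂} {v₁, v₂} g := by
  intro X hX
  rcases X.eq_empty_or_nonempty with rfl | ⟨w, hw⟩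
  · rw [cospectral_iff_adjCharpoly_eq, SimpleGraph.adjCharpoly_induce_compl_empty,
      adjCharpoly_induce_compl_mapSet_empty]
    have hprod := hg.finprod_adjCharpoly_induce_compl_singleton_eq
    rw [finprod_mem_pair he₁.ne, finprod_mem_pair he₂.ne] at hprod
    exact SimpleGraph.adjCharpoly_deleteEdges_eq he₁ he₂ hg.adjCharpoly_eq
      hg.adjCharpoly_induce_compl_eq hprod
  · rw [SimpleGraph.induce_compl_deleteEdges_of_mem G₁ hw (hX hw),
      SimpleGraph.induce_compl_deleteEdges_of_mem G₂ (g.mem_mapSet hw (hX hw)) (g _).2]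
    exact hg X hX
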